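/- arXiv:math/0607146 — 2 statements merged into one kernel-verified Lean document; each statement's English description precedes it below -/
import Mathlib

section
/- Let R be a commutative ring in which k! is invertible and let ⟨·,·⟩ : Sym^k(R²) × Sym^k(R²)* → R be the R-bilinear pairing determined by ⟨X^i Y^{k-i}/(i!(k-i)!), X^{k-j}Y^j⟩ = (-1)^j δ_{ij}. Then for every (a,b) ∈ R² and every homogeneous polynomial P(X,Y) of degree k, one has ⟨(aY - bX)^k / k!, P(X,Y)⟩ = P(a,b). -/
/- STATEMENT 3: divided-power pairing identity ⟨(aY - bX)^k / k!, P(X,Y)⟩ = P(a,b).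
Sym^k(R²) is identified with coefficient vectors (u i) on the divided-power basis
X^i Y^{k-i}/(i!(k-i)!), Sym^k(R²)* with coefficient vectors (v j) on the basis X^{k-j} Y^j,
and the pairing is ⟨u, v⟩ = Σ_i (-1)^i u i * v i (from ⟨b_i, b*_j⟩ = (-1)^j δ_{ij}).
The expansion of (aY - bX)^k / k! on the divided-power basis has coefficients
u i = (-b)^i * a^(k-i), and P(a,b) = Σ_j v j * a^(k-j) * b^j for P = Σ_j v j X^{k-j} Y^j. -/
theorem dividedPower_pairing_eval {R : Type*} [CommRing R] (k : ℕ)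
    (hk : IsUnit (k.factorial : R)) (a b : R) (v : Fin (k + 1) → R) :
    ∑ i : Fin (k + 1), (-1 : R) ^ (i : ℕ) * ((-b) ^ (i : ℕ) * a ^ (k - (i : ℕ))) * v i
      = ∑ j : Fin (k + 1), v j * (a ^ (k - (j : ℕ)) * b ^ (j : ℕ)) := by
  refine Finset.sum_congr rfl fun i _ => ?_
  have : (-1 : R) ^ (i : ℕ) * (-b) ^ (i : ℕ) = b ^ (i : ℕ) := by
    rw [← mul_pow]; ring_nf
  calc (-1 : R) ^ (i : ℕ) * ((-b) ^ (i : ℕ) * a ^ (k - (i : ℕ))) * v i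
      = ((-1 : R) ^ (i : ℕ) * (-b) ^ (i : ℕ)) * a ^ (k - (i : ℕ)) * v i := by ring
    _ = v i * (a ^ (k - (i : ℕ)) * b ^ (i : ℕ)) := by rw [this]; ring
end

section
/- For a quadratic form Q ∈ 𝓕_{Np} and the specialization of a distribution μ on ℤ_p^× × ℤ_p at an arithmetic weight of signature (2k, χ²), one has the interpolation identity: κ̃(J_Q(μ)) = χ(Q)·⟨φ_κ(μ), Q^k⟩, where κ̃(ν) = ∫_{ℤ_p^×} χ_p(z) z^k dν(z), φ_κ(μ) = ∫ χ_p²(x) (xY - yX)^{2k}/(2k)! dμ(x,y), and ⟨·,·⟩ is the divided-power pairing with ⟨(aY-bX)^{2k}/(2k)!, P⟩ = P(a,b). -/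
/- STATEMENT 9: Interpolation identity κ̃(J_Q(μ)) = χ(Q)·⟨φ_κ(μ), Q^k⟩ at an arithmetic
weight of signature (2k, χ²).  Unwinding the definitions
κ̃(ν) = ∫ χ_p(z) z^k dν(z), φ_κ(μ) = ∫ χ_p²(x)(xY-yX)^{2k}/(2k)! dμ and the
divided-power pairing ⟨(xY-yX)^{2k}/(2k)!, Q^k⟩ = Q(x,y)^k, the claim is
∫ χ_p(Q(x,y)) Q(x,y)^k dμ = χ_p(a) · ∫ χ_p(x²) Q(x,y)^k dμ,
where Q(X,Y) = aX² + bXY + cY² with a ∈ ℤ_p^×, χ_p is a multiplicative character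
defined modulo p^m, and p^m ∣ b, p^m ∣ c.  Distributions are modeled as K-linear
functionals on functions on ℤ_p^× × ℤ_p, K being a ℤ_p-algebra. -/
theorem JQ_interpolation (p m : ℕ) [Fact p.Prime] (K : Type*) [CommRing K]
    [Algebra ℤ_[p] K]
    (a b c : ℤ_[p]) (ha : IsUnit a)
    (hb : (p : ℤ_[p]) ^ m ∣ b) (hc : (p : ℤ_[p]) ^ m ∣ c)
    (χp : ℤ_[p] → K)
    (hχmul : ∀ x y : ℤ_[p], χp (x * y) = χp x * χp y)
    (hχcong : ∀ x y : ℤ_[p], (p : ℤ_[p]) ^ m ∣ (x - y) → χp x = χp y)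
    (k : ℕ)
    (μ : ({x : ℤ_[p] // IsUnit x} × ℤ_[p] → K) →ₗ[K] K) :
    μ (fun s => χp (a * (s.1 : ℤ_[p]) ^ 2 + b * (s.1 : ℤ_[p]) * s.2 + c * s.2 ^ 2)
          * (algebraMap ℤ_[p] K
              (a * (s.1 : ℤ_[p]) ^ 2 + b * (s.1 : ℤ_[p]) * s.2 + c * s.2 ^ 2)) ^ k)
      = χp a * μ (fun s => χp ((s.1 : ℤ_[p]) ^ 2)
          * (algebraMap ℤ_[p] K
              (a * (s.1 : ℤ_[p]) ^ 2 + b * (s.1 : ℤ_[p]) * s.2 + c * s.2 ^ 2)) ^ k) := by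
  have hfun : (fun s : {x : ℤ_[p] // IsUnit x} × ℤ_[p] =>
      χp (a * (s.1 : ℤ_[p]) ^ 2 + b * (s.1 : ℤ_[p]) * s.2 + c * s.2 ^ 2)
        * (algebraMap ℤ_[p] K
            (a * (s.1 : ℤ_[p]) ^ 2 + b * (s.1 : ℤ_[p]) * s.2 + c * s.2 ^ 2)) ^ k)
      = χp a • (fun s => χp ((s.1 : ℤ_[p]) ^ 2)
        * (algebraMap ℤ_[p] K
            (a * (s.1 : ℤ_[p]) ^ 2 + b * (s.1 : ℤ_[p]) * s.2 + c * s.2 ^ 2)) ^ k) := by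
    funext s
    have hcong : χp (a * (s.1 : ℤ_[p]) ^ 2 + b * (s.1 : ℤ_[p]) * s.2 + c * s.2 ^ 2)
        = χp (a * (s.1 : ℤ_[p]) ^ 2) := by
      apply hχcong
      have : a * (s.1 : ℤ_[p]) ^ 2 + b * (s.1 : ℤ_[p]) * s.2 + c * s.2 ^ 2
          - a * (s.1 : ℤ_[p]) ^ 2 = b * (s.1 : ℤ_[p]) * s.2 + c * s.2 ^ 2 := by ring
      rw [this]
      exact dvd_add (Dvd.dvd.mul_right (hb.mul_right _) _) (hc.mul_right _)
    simp only [Pi.smul_apply, smul_eq_mul]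
    rw [hcong, hχmul, mul_assoc]
  rw [hfun, map_smul, smul_eq_mul]
end
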